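/- arXiv:2409.18109 — 5 statements merged into one kernel-verified Lean document; each statement's English description precedes it below -/
import Mathlib

section
/- A surjective graph homomorphism α from a graph K to a graph G that restricts to a bijection on the neighborhood of each vertex (a covering map) preserves the colorings computed by color refinement: for every i ≥ 0 and every vertex u of K, C_i(u) = C_i(α(u)), where C_0 is the uniform coloring and C_i(x) = (C_{i-1}(x), multiset of C_{i-1}(y) over neighbors y of x). -/
open SimpleGraph Filter MeasureTheory

/-- Round-`i` color-refinement colour equality across two graphs: `crStep G H i u v`
says that vertex `u` of `G` and vertex `v` of `H` receive the same colour `C_i`. -/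
def crStep {A : Type*} {B : Type*} (G : SimpleGraph A) (H : SimpleGraph B) :
    ℕ → A → B → Prop
  | 0, _, _ => True
  | i + 1, u, v =>
      crStep G H i u v ∧
        ∃ e : G.neighborSet u ≃ H.neighborSet v,
          ∀ x : G.neighborSet u, crStep G H i (x : A) ((e x : H.neighborSet v) : B)

/-- CR-equivalence of two graphs: equal multisets of stable colours, i.e. a colour-preserving
bijection between the vertex sets (colours computed by the joint run of colour refinement). -/
def CREquiv {A B : Type*} (G : SimpleGraph A) (H : SimpleGraph B) : Prop :=
  ∃ φ : A ≃ B, ∀ (v : A) (i : ℕ), crStep G H i v (φ v)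

/-- A graph is CR-identifiable if every CR-equivalent graph is isomorphic to it. -/
def CRIdentifiable {A : Type*} (G : SimpleGraph A) : Prop :=
  ∀ (B : Type) (H : SimpleGraph B), CREquiv G H → Nonempty (G ≃g H)

/-- A covering map: a surjective homomorphism restricting to a bijection on each neighbourhood. -/
def GraphCoveringMap {A B : Type*} (K : SimpleGraph A) (G : SimpleGraph B) (f : A → B) : Prop :=
  Function.Surjective f ∧ (∀ ⦃u v : A⦄, K.Adj u v → G.Adj (f u) (f v)) ∧
    ∀ u : A, Set.BijOn f (K.neighborSet u) (G.neighborSet (f u))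

/-- A set of vertices each having at least two neighbours inside the set. -/
def IsTwoCoreSet {V : Type*} (G : SimpleGraph V) (S : Set V) : Prop :=
  ∀ v ∈ S, ∃ a b, a ≠ b ∧ a ∈ S ∧ b ∈ S ∧ G.Adj v a ∧ G.Adj v b

/-- The 2-core: the maximal vertex set inducing a subgraph of minimum degree at least 2. -/
def twoCore {V : Type*} (G : SimpleGraph V) : Set V :=
  ⋃₀ {S : Set V | IsTwoCoreSet G S}

/-- Vertices reachable from `x` by a walk avoiding the 2-core except at `x`:
the vertex set of the rooted tree `T_x` hanging at a core vertex `x`. -/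
def treeSet {V : Type*} (G : SimpleGraph V) (x : V) : Set V :=
  {y | ∃ w : G.Walk x y, ∀ z ∈ w.support, z = x ∨ z ∉ twoCore G}

lemma mem_treeSet_self {V : Type*} (G : SimpleGraph V) (x : V) : x ∈ treeSet G x :=
  ⟨SimpleGraph.Walk.nil, by
    intro z hz
    simp only [SimpleGraph.Walk.support_nil, List.mem_singleton] at hz
    exact Or.inl hz⟩

/-- The trees hanging at `x` (in `G`) and at `y` (in `H`) are isomorphic as rooted trees. -/
def RootedTreeIso {V W : Type*} (G : SimpleGraph V) (x : V) (H : SimpleGraph W) (y : W) : Prop :=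
  ∃ φ : (G.induce (treeSet G x)) ≃g (H.induce (treeSet H y)),
    φ ⟨x, mem_treeSet_self G x⟩ = ⟨y, mem_treeSet_self H y⟩

/-- For a unicyclic graph, the 2-core is its unique cycle; `cLen` is the cycle length. -/
noncomputable def cLen {V : Type*} (G : SimpleGraph V) : ℕ := (twoCore G).ncard

/-- A finite connected graph with exactly one cycle. -/
def Unicyclic {V : Type*} (G : SimpleGraph V) : Prop :=
  G.Connected ∧ Nat.card G.edgeSet = Nat.card V

/-- An enumeration of the unique cycle of a unicyclic graph, as a `cLen G`-periodic
sequence running once around the cycle. -/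
def IsCycleEnum {V : Type*} (G : SimpleGraph V) (e : ℕ → V) : Prop :=
  0 < cLen G ∧ (∀ i, e (i + cLen G) = e i) ∧
    (∀ i j, i < cLen G → j < cLen G → e i = e j → i = j) ∧
    Set.range e = twoCore G ∧ ∀ i, G.Adj (e i) (e (i + 1))

/-- `q` is the length of a period of the circular word `R(G)` of rooted-tree types. -/
def HasPeriod {V : Type*} (G : SimpleGraph V) (q : ℕ) : Prop :=
  0 < q ∧ q ∣ cLen G ∧ ∃ e, IsCycleEnum G e ∧ ∀ i, RootedTreeIso G (e (i + q)) G (e i)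

/-- The minimal periodicity `p(G)` of the circular word `R(G)`. -/
noncomputable def periodicity {V : Type*} (G : SimpleGraph V) : ℕ :=
  sInf {q | HasPeriod G q}

/-- The circular words `R(G)` and `R(H)` have a common period of length `q`. -/
def CommonPeriod {V W : Type*} (G : SimpleGraph V) (H : SimpleGraph W) (q : ℕ) : Prop :=
  0 < q ∧ q ∣ cLen G ∧ q ∣ cLen H ∧
    ∃ eG eH, IsCycleEnum G eG ∧ IsCycleEnum H eH ∧
      (∀ i, RootedTreeIso G (eG (i + q)) G (eG i)) ∧
      (∀ i, RootedTreeIso H (eH (i + q)) H (eH i)) ∧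
      ∀ i, RootedTreeIso G (eG i) H (eH i)

/-- The universal covers of `G` and `H` are isomorphic, expressed as the existence of a
single tree covering both graphs. -/
def CommonUniversalCover {V W : Type*} (G : SimpleGraph V) (H : SimpleGraph W) : Prop :=
  ∃ (T : Type) (U : SimpleGraph T) (f : T → V) (g : T → W),
    U.IsTree ∧ GraphCoveringMap U G f ∧ GraphCoveringMap U H g

/-- The vertex set of the complex part of `G`: vertices whose connected component has more
edges than vertices. -/
def complexSet {V : Type*} (G : SimpleGraph V) : Set V :=
  {v | (G.connectedComponentMk v).supp.ncard <
        Nat.card (G.induce (G.connectedComponentMk v).supp).edgeSet}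

theorem crStep_of_bijOn_neighborSet {A B : Type*} {K : SimpleGraph A} {G : SimpleGraph B}
    {f : A → B} (hf : ∀ u, Set.BijOn f (K.neighborSet u) (G.neighborSet (f u))) :
    ∀ (i : ℕ) (u : A), crStep K G i u (f u)
  | 0, _ => trivial
  | i + 1, u => ⟨crStep_of_bijOn_neighborSet hf i u, (hf u).equiv f,
      fun x => crStep_of_bijOn_neighborSet hf i x⟩

/-- A covering map `f` from `K` to `G` preserves the colourings computed by colour refinement:
for every round `i` and every vertex `u` of `K`, the colour `C_i(u)` computed in `K` equals the
colour `C_i(f u)` computed in `G`. -/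
theorem covering_map_preserves_CR {A B : Type*} (K : SimpleGraph A) (G : SimpleGraph B)
    (f : A → B) (hf : GraphCoveringMap K G f) :
    ∀ (i : ℕ) (u : A), crStep K G i u (f u) :=
  crStep_of_bijOn_neighborSet hf.2.2
end

section
/- A connected finite graph G is unicyclic (contains exactly one cycle) if and only if its universal cover U^G contains a unique two-way infinite path. -/
open SimpleGraph Filter MeasureTheory

/-!
A two-way infinite path in the tree `U` is a non-backtracking two-way infinite walk; the covering
map sends such walks to non-backtracking walks in `G`, and every walk in `G` lifts to `U`.

If `G` has as many edges as vertices, it is a spanning tree `t` plus one edge `ab`, which closes a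
cycle `C`. A non-backtracking walk in `G` between two vertices of `C` runs along `C`: between two
uses of `ab` it is a non-backtracking walk in `t`, hence the `t`-path between two vertices of the
arc `C - ab`. A non-backtracking two-way infinite walk cannot stay inside the finite forest `t` and
so returns to `C` in both directions; hence every such walk runs along `C`, and so does the image
of a path in `U` joining two lifts of it. At a vertex of a lift of `C` exactly two neighbours lie
over edges of `C`, namely its neighbours on the lift, so all two-way infinite paths in `U` have the
same vertex set.

If `G` has fewer edges it is a tree, which has no non-backtracking infinite walk. If it has more,
two non-tree edges give two fundamental cycles, whose lifts are two-way infinite paths in `U`.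
They cannot have the same vertex set: in a tree, a two-way infinite path contains every edge
between two of its vertices, while the first cycle has an edge that is not on the second.
-/

namespace SimpleGraph

variable {W : Type*} {X : SimpleGraph W}

def seqWalk (d : ℕ → W) : (n : ℕ) → (∀ k < n, X.Adj (d k) (d (k + 1))) → X.Walk (d 0) (d n)
  | 0, _ => .nil
  | n + 1, h => (seqWalk d n fun k hk => h k (by omega)).concat (h n (by omega))

lemma support_seqWalk (d : ℕ → W) (n : ℕ) (h : ∀ k < n, X.Adj (d k) (d (k + 1))) :
    (seqWalk d n h).support = (List.range (n + 1)).map d := by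
  induction n with
  | zero => rfl
  | succ n ih => simp [seqWalk, Walk.support_concat, ih, List.range_succ (n := n + 1)]

lemma edges_seqWalk (d : ℕ → W) (n : ℕ) (h : ∀ k < n, X.Adj (d k) (d (k + 1))) :
    (seqWalk d n h).edges = (List.range n).map fun k => s(d k, d (k + 1)) := by
  induction n with
  | zero => rfl
  | succ n ih => simp [seqWalk, Walk.edges_concat, ih, List.range_succ (n := n)]

lemma length_seqWalk (d : ℕ → W) (n : ℕ) (h : ∀ k < n, X.Adj (d k) (d (k + 1))) :
    (seqWalk d n h).length = n := by
  induction n with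
  | zero => rfl
  | succ n ih => simp [seqWalk, ih]

lemma IsAcyclic.isPath_seqWalk (hX : X.IsAcyclic) (d : ℕ → W) (n : ℕ)
    (h : ∀ k < n, X.Adj (d k) (d (k + 1))) (hnb : ∀ k, k + 2 ≤ n → d (k + 2) ≠ d k) :
    (seqWalk d n h).IsPath := by
  rw [hX.isPath_iff_isChain, edges_seqWalk, List.isChain_map, List.isChain_range]
  intro k hk heq
  rcases Sym2.eq_iff.mp heq with ⟨h1, -⟩ | ⟨h1, -⟩
  · exact (h k (by omega)).ne h1
  · exact hnb k (by omega) h1.symm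

lemma IsAcyclic.injective_of_adj_of_ne (hX : X.IsAcyclic) {d : ℕ → W}
    (h : ∀ k, X.Adj (d k) (d (k + 1))) (hnb : ∀ k, d (k + 2) ≠ d k) : Function.Injective d := by
  intro i j hij
  have hpath := hX.isPath_seqWalk d (max i j) (fun k _ => h k) (fun k _ => hnb k)
  rw [Walk.isPath_def, support_seqWalk] at hpath
  exact List.inj_on_of_nodup_map hpath (by simp) (by simp) hij

structure IsNonbacktracking (X : SimpleGraph W) (c : ℤ → W) : Prop where
  adj : ∀ k, X.Adj (c k) (c (k + 1))
  ne : ∀ k, c (k + 2) ≠ c k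

namespace IsNonbacktracking

variable {c : ℤ → W}

lemma of_injective (h : ∀ k, X.Adj (c k) (c (k + 1))) (hc : Function.Injective c) :
    IsNonbacktracking X c :=
  ⟨h, fun k hk => by have := hc hk; omega⟩

lemma comp_neg (hc : IsNonbacktracking X c) : IsNonbacktracking X fun k => c (-k) where
  adj k := by simpa [neg_add_eq_sub] using (hc.adj (-k - 1)).symm
  ne k := by simpa [neg_add_eq_sub, sub_add_eq_add_sub] using (hc.ne (-k - 2)).symm

lemma adj_add (hc : IsNonbacktracking X c) (i : ℤ) (n : ℕ) :
    X.Adj (c (i + n)) (c (i + (n + 1 : ℕ))) := by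
  simpa [add_assoc] using hc.adj (i + n)

lemma ne_add (hc : IsNonbacktracking X c) (i : ℤ) (n : ℕ) : c (i + (n + 2 : ℕ)) ≠ c (i + n) := by
  simpa [add_assoc] using hc.ne (i + n)

lemma of_comp {A B : Type*} {K : SimpleGraph A} {G : SimpleGraph B} {f : A → B} {c : ℤ → A}
    (hc : ∀ k, K.Adj (c k) (c (k + 1))) (hfc : IsNonbacktracking G (f ∘ c)) :
    IsNonbacktracking K c :=
  ⟨hc, fun k h => hfc.ne k (by simp [h])⟩

end IsNonbacktracking

lemma IsAcyclic.injective_of_isNonbacktracking (hX : X.IsAcyclic) {c : ℤ → W}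
    (hc : IsNonbacktracking X c) : Function.Injective c := by
  suffices ∀ i j, i < j → c i ≠ c j by
    intro i j hij
    by_contra hne
    rcases lt_or_gt_of_ne hne with h | h
    exacts [this i j h hij, this j i h hij.symm]
  intro i j hij heq
  have := hX.injective_of_adj_of_ne (hc.adj_add i) (hc.ne_add i) (a₁ := 0) (a₂ := (j - i).toNat)
    (by simp only [Nat.cast_zero, add_zero, show i + (j - i).toNat = j by omega]; exact heq)
  omega

lemma IsNonbacktracking.not_isAcyclic [Finite W] {c : ℤ → W} (hc : IsNonbacktracking X c) :
    ¬ X.IsAcyclic :=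
  fun hX => not_injective_infinite_finite c (hX.injective_of_isNonbacktracking hc)

lemma IsAcyclic.eq_add_one_of_adj (hX : X.IsAcyclic) {c : ℤ → W} (hc : Function.Injective c)
    (h : ∀ k, X.Adj (c k) (c (k + 1))) {i j : ℤ} (hij : i < j) (hadj : X.Adj (c i) (c j)) :
    j = i + 1 := by
  have hnb := IsNonbacktracking.of_injective h hc
  let p : X.Walk (c i) (c j) :=
    (seqWalk _ (j - i).toNat fun n _ => hnb.adj_add i n).copy (by simp)
      (by rw [show i + (j - i).toNat = j by omega])
  have hp : p.IsPath := by
    simpa [p] using hX.isPath_seqWalk _ _ _ fun n _ => hnb.ne_add i n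
  have := congrArg Walk.length (congrArg Subtype.val
    ((hX.subsingleton_path _ _).elim ⟨p, hp⟩ ⟨hadj.toWalk, .of_adj hadj⟩))
  simp [p, length_seqWalk] at this
  omega

lemma IsAcyclic.exists_sym2_eq_of_range_subset (hX : X.IsAcyclic) {c c' : ℤ → W}
    (hc : ∀ k, X.Adj (c k) (c (k + 1))) (hc' : Function.Injective c')
    (hc'adj : ∀ k, X.Adj (c' k) (c' (k + 1))) (hsub : Set.range c ⊆ Set.range c') (k : ℤ) :
    ∃ m, s(c k, c (k + 1)) = s(c' m, c' (m + 1)) := by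
  obtain ⟨i, hi⟩ := hsub ⟨k, rfl⟩
  obtain ⟨j, hj⟩ := hsub ⟨k + 1, rfl⟩
  have hadj : X.Adj (c' i) (c' j) := hi ▸ hj ▸ hc k
  rcases lt_or_gt_of_ne (fun h : i = j => hadj.ne (congrArg c' h)) with h | h
  · exact ⟨i, by rw [← hi, ← hj, hX.eq_add_one_of_adj hc' hc'adj h hadj]⟩
  · exact ⟨j, by rw [← hi, ← hj, hX.eq_add_one_of_adj hc' hc'adj h hadj.symm, Sym2.eq_swap]⟩

section TreePlusEdge

variable {V : Type*} {G t : SimpleGraph V}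

lemma IsAcyclic.edges_subset_edges_of_mem_support (ht : t.IsAcyclic) {x y u v : V}
    {P : t.Walk x y} (hP : P.IsPath) {q : t.Walk u v} (hq : q.IsPath) (hu : u ∈ P.support)
    (hv : v ∈ P.support) : q.edges ⊆ P.edges := by
  classical
  have of_isPath (r : t.Walk u v) (hr : r.IsPath) (hrP : r.edges ⊆ P.edges) :
      q.edges ⊆ P.edges := by
    rwa [show q = r from congrArg Subtype.val ((ht.subsingleton_path u v).elim ⟨q, hq⟩ ⟨r, hr⟩)]
  rw [← P.take_spec hu, Walk.mem_support_append_iff] at hv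
  rcases hv with hv | hv
  · refine of_isPath _ ((hP.takeUntil hu).dropUntil hv).reverse fun e he => ?_
    rw [Walk.edges_reverse, List.mem_reverse] at he
    exact P.edges_takeUntil_subset_edges hu ((P.takeUntil u hu).edges_dropUntil_subset_edges hv he)
  · exact of_isPath _ ((hP.dropUntil hu).takeUntil hv) fun e he =>
      P.edges_dropUntil_subset_edges hu ((P.dropUntil u hu).edges_takeUntil_subset_edges hv he)

variable {a b : V}

lemma IsAcyclic.sym2_mem_cons_edges_of_nonbacktracking (ht : t.IsAcyclic)
    (hGt : ∀ ⦃x y⦄, G.Adj x y → s(x, y) ≠ s(a, b) → t.Adj x y) {P : t.Walk b a} (hP : P.IsPath)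
    (M : ℕ) (d : ℕ → V) (hadj : ∀ k < M, G.Adj (d k) (d (k + 1)))
    (hnb : ∀ k, k + 2 ≤ M → d (k + 2) ≠ d k) (h0 : d 0 ∈ P.support) (hM : d M ∈ P.support)
    {k : ℕ} (hk : k < M) : s(d k, d (k + 1)) ∈ s(a, b) :: P.edges := by
  induction M using Nat.strong_induction_on generalizing d k with
  | _ M ih =>
  by_cases huse : ∃ j < M, s(d j, d (j + 1)) = s(a, b)
  · obtain ⟨j, hjM, hj⟩ := huse
    have hends : d j ∈ P.support ∧ d (j + 1) ∈ P.support := by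
      rcases Sym2.eq_iff.mp hj with ⟨h1, h2⟩ | ⟨h1, h2⟩ <;> simp [h1, h2]
    rcases lt_trichotomy k j with hkj | rfl | hjk
    · exact ih j hjM d (fun i hi => hadj i (by omega)) (fun i hi => hnb i (by omega)) h0 hends.1 hkj
    · exact hj ▸ List.mem_cons_self
    · have := ih (M - (j + 1)) (by omega) (fun i => d (j + 1 + i))
        (fun i hi => by simpa [add_assoc] using hadj (j + 1 + i) (by omega))
        (fun i hi => by simpa [add_assoc] using hnb (j + 1 + i) (by omega)) hends.2
        (by simpa [show j + 1 + (M - (j + 1)) = M by omega]) (k := k - (j + 1)) (by omega)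
      simpa [show j + 1 + (k - (j + 1)) = k by omega, ← add_assoc] using this
  · push Not at huse
    have hpath := ht.isPath_seqWalk d M (fun i hi => hGt (hadj i hi) (huse i hi)) hnb
    refine List.mem_cons_of_mem _ (ht.edges_subset_edges_of_mem_support hP hpath h0 hM ?_)
    rw [edges_seqWalk]
    exact List.mem_map.mpr ⟨k, List.mem_range.mpr hk, rfl⟩

lemma IsNonbacktracking.exists_eq_or_eq [Finite V] (ht : t.IsAcyclic)
    (hGt : ∀ ⦃x y⦄, G.Adj x y → s(x, y) ≠ s(a, b) → t.Adj x y) {h : ℤ → V}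
    (hh : IsNonbacktracking G h) (k : ℤ) : ∃ n : ℕ, h (k + n) = a ∨ h (k + n) = b := by
  by_contra! hout
  refine not_injective_infinite_finite (fun n : ℕ => h (k + n))
    (ht.injective_of_adj_of_ne (fun n => hGt (hh.adj_add k n) fun heq => ?_) (hh.ne_add k))
  rcases Sym2.eq_iff.mp heq with ⟨h1, -⟩ | ⟨h1, -⟩
  exacts [(hout n).1 h1, (hout n).2 h1]

lemma IsNonbacktracking.sym2_mem_cons_edges [Finite V] (ht : t.IsAcyclic)
    (hGt : ∀ ⦃x y⦄, G.Adj x y → s(x, y) ≠ s(a, b) → t.Adj x y) {P : t.Walk b a} (hP : P.IsPath)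
    {h : ℤ → V} (hh : IsNonbacktracking G h) (k : ℤ) : s(h k, h (k + 1)) ∈ s(a, b) :: P.edges := by
  have mem_support {x : V} (hx : x = a ∨ x = b) : x ∈ P.support := by
    rcases hx with rfl | rfl
    exacts [P.end_mem_support, P.start_mem_support]
  obtain ⟨n, hn⟩ := hh.exists_eq_or_eq ht hGt (k + 1)
  obtain ⟨m, hm⟩ := hh.comp_neg.exists_eq_or_eq ht hGt (-k)
  have := ht.sym2_mem_cons_edges_of_nonbacktracking hGt hP (m + 1 + n) (fun i => h (k - m + i))
    (fun i _ => hh.adj_add _ i) (fun i _ => hh.ne_add _ i)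
    (by simpa [neg_add_eq_sub] using mem_support hm)
    (by convert mem_support hn using 2; push_cast; ring) (k := m) (by omega)
  convert this using 3 <;> push_cast <;> ring

end TreePlusEdge

namespace Walk

variable {V : Type*} {G : SimpleGraph V} {u : V}

def getVertMod (c : G.Walk u u) (k : ℤ) : V := c.getVert (k % c.length).toNat

variable {c : G.Walk u u}

lemma getVertMod_add_one (hc : 0 < c.length) (k : ℤ) :
    c.getVertMod (k + 1) = c.getVert ((k % c.length).toNat + 1) := by
  have hL : (0 : ℤ) < c.length := by exact_mod_cast hc
  have h0 := Int.emod_nonneg k hL.ne'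
  have h1 := Int.emod_lt_of_pos k hL
  have hmod := (Int.emod_add_emod k c.length 1).symm
  rcases (show k % c.length + 1 < c.length ∨ k % c.length + 1 = c.length by omega) with h | h
  · rw [getVertMod, hmod, Int.emod_eq_of_lt (by omega) h]
    congr 1
    omega
  · rw [getVertMod, hmod, h, Int.emod_self, show (k % c.length).toNat + 1 = c.length by omega]
    simp

lemma getVertMod_zero : c.getVertMod 0 = u := by
  simp [getVertMod]

lemma getVertMod_one (hc : 0 < c.length) : c.getVertMod 1 = c.snd := by
  simpa using c.getVertMod_add_one hc 0

lemma toSubgraph_adj_getVertMod (hc : 0 < c.length) (k : ℤ) :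
    c.toSubgraph.Adj (c.getVertMod k) (c.getVertMod (k + 1)) := by
  have := Int.emod_lt_of_pos k (by exact_mod_cast hc : (0 : ℤ) < c.length)
  rw [getVertMod_add_one hc]
  exact c.toSubgraph_adj_getVert (by omega)

lemma IsCycle.isNonbacktracking_getVertMod (hc : c.IsCycle) : IsNonbacktracking G c.getVertMod where
  adj k := (c.toSubgraph_adj_getVertMod (by have := hc.three_le_length; omega) k).adj_sub
  ne k heq := by
    have h3 := hc.three_le_length
    have hL : (0 : ℤ) < c.length := by omega
    have := Int.emod_nonneg k hL.ne'
    have := Int.emod_nonneg (k + 2) hL.ne'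
    have := Int.emod_lt_of_pos k hL
    have := Int.emod_lt_of_pos (k + 2) hL
    have hidx := hc.getVert_injOn' (show ((k + 2) % c.length).toNat ≤ c.length - 1 by omega)
      (show (k % c.length).toNat ≤ c.length - 1 by omega) heq
    have hdvd : (c.length : ℤ) ∣ 2 := by
      simpa using Int.ModEq.dvd (show k ≡ k + 2 [ZMOD c.length] by
        unfold Int.ModEq; omega)
    have := Int.le_of_dvd (by norm_num) hdvd
    omega

end Walk

variable {V : Type*} {G t : SimpleGraph V}

lemma IsTree.exists_isCycle_cons (ht : t.IsTree) (htG : t ≤ G) {a b : V} (hab : G.Adj a b)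
    (hnt : ¬ t.Adj a b) : ∃ P : t.Walk b a, P.IsPath ∧ (Walk.cons hab (P.mapLe htG)).IsCycle := by
  obtain ⟨P, hP⟩ := (ht.connected b a).exists_isPath
  refine ⟨P, hP, (Walk.cons_isCycle_iff _ hab).mpr ⟨hP.mapLe htG, fun h => hnt ?_⟩⟩
  rw [Walk.edges_mapLe_eq_edges] at h
  exact P.edges_subset_edgeSet h

lemma IsTree.ncard_sdiff_add_card [Finite V] (ht : t.IsTree) (htG : t ≤ G) :
    (G.edgeSet \ t.edgeSet).ncard + Nat.card V = Nat.card G.edgeSet + 1 := by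
  have hcard := (isTree_iff_connected_and_card.mp ht).2
  have hsub := edgeSet_mono htG
  have := Set.ncard_le_ncard hsub
  rw [Set.ncard_sdiff hsub]
  simp only [Nat.card_coe_set_eq] at hcard ⊢
  omega

lemma Connected.exists_isTree_of_card_edgeSet_eq [Finite V] (hG : G.Connected)
    (hcard : Nat.card G.edgeSet = Nat.card V) :
    ∃ t ≤ G, t.IsTree ∧ ∃ a b, G.Adj a b ∧ ¬ t.Adj a b ∧
      ∀ ⦃x y⦄, G.Adj x y → s(x, y) ≠ s(a, b) → t.Adj x y := by
  obtain ⟨t, htG, ht⟩ := hG.exists_isTree_le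
  obtain ⟨e, he⟩ := Set.ncard_eq_one.mp (show (G.edgeSet \ t.edgeSet).ncard = 1 by
    have := ht.ncard_sdiff_add_card htG
    omega)
  have hmem : e ∈ G.edgeSet \ t.edgeSet := he ▸ rfl
  induction e using Sym2.ind with
  | _ a b =>
  refine ⟨t, htG, ht, a, b, hmem.1, hmem.2, fun x y hxy hne => ?_⟩
  by_contra hnt
  exact hne (show s(x, y) ∈ ({s(a, b)} : Set (Sym2 V)) from he ▸ ⟨hxy, hnt⟩)

lemma Connected.card_le_card_edgeSet [Finite V] (hG : G.Connected) (h : ¬ G.IsAcyclic) :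
    Nat.card V ≤ Nat.card G.edgeSet := by
  have := hG.card_vert_le_card_edgeSet_add_one
  have : Nat.card G.edgeSet + 1 ≠ Nat.card V := fun hcard =>
    h (isTree_iff_connected_and_card.mpr ⟨hG, hcard⟩).isAcyclic
  omega

end SimpleGraph

namespace GraphCoveringMap

variable {A B : Type*} {K : SimpleGraph A} {G t : SimpleGraph B} {f : A → B}

lemma eq_of_adj_of_adj (hf : GraphCoveringMap K G f) {u x y : A} (hx : K.Adj u x)
    (hy : K.Adj u y) (h : f x = f y) : x = y :=
  (hf.2.2 u).injOn hx hy h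

lemma isNonbacktracking_comp (hf : GraphCoveringMap K G f) {c : ℤ → A}
    (hc : IsNonbacktracking K c) : IsNonbacktracking G (f ∘ c) where
  adj k := hf.2.1 (hc.adj k)
  ne k h := hc.ne k <| hf.eq_of_adj_of_adj (by simpa [add_assoc] using hc.adj (k + 1))
    (hc.adj k).symm h

lemma exists_lift_nat (hf : GraphCoveringMap K G f) {d : ℕ → B}
    (hd : ∀ n, G.Adj (d n) (d (n + 1))) {u : A} (hu : f u = d 0) :
    ∃ e : ℕ → A, e 0 = u ∧ (∀ n, K.Adj (e n) (e (n + 1))) ∧ ∀ n, f (e n) = d n := by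
  have step (x : A) (y : B) : ∃ x', G.Adj (f x) y → K.Adj x x' ∧ f x' = y := by
    by_cases h : G.Adj (f x) y
    · obtain ⟨x', hx', hfx'⟩ := (hf.2.2 x).surjOn h
      exact ⟨x', fun _ => ⟨hx', hfx'⟩⟩
    · exact ⟨x, fun h' => absurd h' h⟩
  choose next hnext using step
  let e : ℕ → A := fun n => Nat.rec u (fun n x => next x (d (n + 1))) n
  have he : ∀ n, f (e n) = d n := by
    intro n
    induction n with
    | zero => exact hu
    | succ n ih => exact (hnext (e n) (d (n + 1)) (ih ▸ hd n)).2
  exact ⟨e, rfl, fun n => (hnext (e n) (d (n + 1)) ((he n).symm ▸ hd n)).1, he⟩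

lemma exists_lift (hf : GraphCoveringMap K G f) {d : ℤ → B}
    (hd : ∀ k, G.Adj (d k) (d (k + 1))) :
    ∃ g : ℤ → A, (∀ k, K.Adj (g k) (g (k + 1))) ∧ f ∘ g = d := by
  obtain ⟨u, hu⟩ := hf.1 (d 0)
  obtain ⟨fwd, hfwd0, hfwdadj, hfwdf⟩ := hf.exists_lift_nat (d := fun n => d n)
    (fun n => by simpa using hd n) hu
  obtain ⟨bwd, hbwd0, hbwdadj, hbwdf⟩ := hf.exists_lift_nat (d := fun n => d (-n))
    (fun n => by simpa [neg_add_eq_sub] using (hd (-n - 1)).symm) (by simpa using hu)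
  let g : ℤ → A := fun k => if 0 ≤ k then fwd k.toNat else bwd (-k).toNat
  have hneg (k : ℤ) (hk : k ≤ 0) : g k = bwd (-k).toNat := by
    rcases hk.lt_or_eq with hk | rfl
    · simp [g, show ¬ 0 ≤ k by omega]
    · simp [g, hfwd0, hbwd0]
  refine ⟨g, fun k => ?_, funext fun k => ?_⟩
  · rcases le_or_gt 0 k with hk | hk
    · simpa [g, hk, show 0 ≤ k + 1 by omega, show (k + 1).toNat = k.toNat + 1 by omega]
        using hfwdadj k.toNat
    · rw [hneg k hk.le, hneg (k + 1) (by omega), show (-k).toNat = (-(k + 1)).toNat + 1 by omega]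
      exact (hbwdadj _).symm
  · rcases le_or_gt 0 k with hk | hk
    · simp [g, hk, hfwdf, show (k.toNat : ℤ) = k by omega]
    · simp [hneg k hk.le, hbwdf, show ((-k).toNat : ℤ) = -k by omega]

lemma eq_add_one_or_eq_sub_one (hf : GraphCoveringMap K G f) {u : B} {C : G.Walk u u}
    (hC : C.IsCycle) {g : ℤ → A} (hg : ∀ k, K.Adj (g k) (g (k + 1)))
    (hfg : IsNonbacktracking G (f ∘ g)) (hgC : ∀ k, C.toSubgraph.Adj (f (g k)) (f (g (k + 1))))
    {k : ℤ} {y : A} (hy : K.Adj (g k) y) (hyC : C.toSubgraph.Adj (f (g k)) (f y)) :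
    y = g (k + 1) ∨ y = g (k - 1) := by
  have hprev : K.Adj (g k) (g (k - 1)) := by simpa using (hg (k - 1)).symm
  have hne : f (g (k + 1)) ≠ f (g (k - 1)) := by
    simpa [show k - 1 + 2 = k + 1 by ring] using hfg.ne (k - 1)
  have hnbr : C.toSubgraph.neighborSet (f (g k)) = {f (g (k + 1)), f (g (k - 1))} := by
    refine (Set.eq_of_subset_of_ncard_le ?_ ?_ (C.finite_neighborSet_toSubgraph)).symm
    · exact Set.insert_subset_iff.mpr ⟨hgC k, Set.singleton_subset_iff.mpr
        (by simpa using (hgC (k - 1)).symm)⟩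
    · rw [hC.ncard_neighborSet_toSubgraph_eq_two (C.mem_verts_toSubgraph.mp (hgC k).fst_mem),
        Set.ncard_pair hne]
  have hfy : f y ∈ C.toSubgraph.neighborSet (f (g k)) := hyC
  rw [hnbr] at hfy
  rcases hfy with h | h
  exacts [Or.inl (hf.eq_of_adj_of_adj hy (hg k) h), Or.inr (hf.eq_of_adj_of_adj hy hprev h)]

lemma exists_injective_lift_getVertMod (hf : GraphCoveringMap K G f) (hK : K.IsAcyclic) {u : B}
    {C : G.Walk u u} (hC : C.IsCycle) :
    ∃ g : ℤ → A, Function.Injective g ∧ (∀ k, K.Adj (g k) (g (k + 1))) ∧ f ∘ g = C.getVertMod := by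
  obtain ⟨g, hg, hfg⟩ := hf.exists_lift hC.isNonbacktracking_getVertMod.adj
  exact ⟨g, hK.injective_of_isNonbacktracking (.of_comp hg (hfg ▸ hC.isNonbacktracking_getVertMod)),
    hg, hfg⟩

lemma mem_range_of_walk (hf : GraphCoveringMap K G f) {u : B} {C : G.Walk u u}
    (hC : C.IsCycle) {g : ℤ → A} (hg : ∀ k, K.Adj (g k) (g (k + 1)))
    (hfg : IsNonbacktracking G (f ∘ g)) (hgC : ∀ k, C.toSubgraph.Adj (f (g k)) (f (g (k + 1))))
    {i : ℤ} {y : A} (p : K.Walk (g i) y)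
    (hp : ∀ n < p.length, C.toSubgraph.Adj (f (p.getVert n)) (f (p.getVert (n + 1)))) :
    y ∈ Set.range g := by
  suffices ∀ n, p.getVert n ∈ Set.range g by simpa using this p.length
  intro n
  induction n with
  | zero => exact ⟨i, by simp⟩
  | succ n ih =>
    by_cases hn : n < p.length
    · obtain ⟨k, hk⟩ := ih
      have hadj := p.adj_getVert_succ hn
      have hC' := hp n hn
      rw [← hk] at hadj hC'
      rcases hf.eq_add_one_or_eq_sub_one hC hg hfg hgC hadj hC' with h | h
      exacts [⟨_, h.symm⟩, ⟨_, h.symm⟩]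
    · rwa [p.getVert_of_length_le (by omega), ← p.getVert_of_length_le (not_lt.mp hn)]

lemma range_subset_range_of_isCycle_cons [Finite B] (hf : GraphCoveringMap K G f)
    (hK : K.Connected) (ht : t.IsAcyclic) (htG : t ≤ G) {a b : B} (hab : G.Adj a b)
    (hGt : ∀ ⦃x y⦄, G.Adj x y → s(x, y) ≠ s(a, b) → t.Adj x y) {P : t.Walk b a} (hP : P.IsPath)
    (hC : (Walk.cons hab (P.mapLe htG)).IsCycle) {g g' : ℤ → A} (hg : Function.Injective g)
    (hgadj : ∀ k, K.Adj (g k) (g (k + 1))) (hg' : Function.Injective g')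
    (hg'adj : ∀ k, K.Adj (g' k) (g' (k + 1))) : Set.range g' ⊆ Set.range g := by
  have toC {x y : B} (h : s(x, y) ∈ s(a, b) :: P.edges) :
      (Walk.cons hab (P.mapLe htG)).toSubgraph.Adj x y := by
    rwa [Walk.adj_toSubgraph_iff_mem_edges, Walk.edges_cons, Walk.edges_mapLe_eq_edges]
  have mem_support {x y : B} (h : s(x, y) ∈ s(a, b) :: P.edges) : x ∈ P.support := by
    have := (Walk.mem_verts_toSubgraph _).mp (toC h).fst_mem
    rw [Walk.support_cons, Walk.support_mapLe_eq_support, List.mem_cons] at this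
    rcases this with rfl | h
    exacts [P.end_mem_support, h]
  have hnb := hf.isNonbacktracking_comp (.of_injective hgadj hg)
  have hnb' := hf.isNonbacktracking_comp (.of_injective hg'adj hg')
  rintro _ ⟨k, rfl⟩
  obtain ⟨p, hp⟩ := (hK.preconnected (g 0) (g' k)).exists_isPath
  refine hf.mem_range_of_walk hC hgadj hnb (fun j => toC (hnb.sym2_mem_cons_edges ht hGt hP j)) p
    fun n hn => toC ?_
  refine ht.sym2_mem_cons_edges_of_nonbacktracking hGt hP p.length (fun n => f (p.getVert n))
    (fun n hn => hf.2.1 (p.adj_getVert_succ hn)) (fun n hn heq => ?_) ?_ ?_ hn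
  · have := hf.eq_of_adj_of_adj (p.adj_getVert_succ (by omega))
      (p.adj_getVert_succ (by omega)).symm heq
    have := hp.getVert_injOn (by simp; omega) (by simp; omega) this
    omega
  · simpa using mem_support (hnb.sym2_mem_cons_edges ht hGt hP 0)
  · simpa using mem_support (hnb'.sym2_mem_cons_edges ht hGt hP k)

lemma exists_not_range_subset_of_card_lt [Finite B] (hf : GraphCoveringMap K G f)
    (hK : K.IsAcyclic) (hG : G.Connected) (hlt : Nat.card B < Nat.card G.edgeSet) :
    ∃ g g' : ℤ → A, Function.Injective g ∧ (∀ k, K.Adj (g k) (g (k + 1))) ∧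
      Function.Injective g' ∧ (∀ k, K.Adj (g' k) (g' (k + 1))) ∧ ¬ Set.range g ⊆ Set.range g' := by
  obtain ⟨t, htG, ht⟩ := hG.exists_isTree_le
  obtain ⟨e, e', he, he', hne⟩ := (Set.one_lt_ncard_iff (Set.toFinite _)).mp
    (show 1 < (G.edgeSet \ t.edgeSet).ncard by have := ht.ncard_sdiff_add_card htG; omega)
  induction e using Sym2.ind with | _ a b =>
  induction e' using Sym2.ind with | _ a' b' =>
  obtain ⟨hab : G.Adj a b, hnt : ¬ t.Adj a b⟩ := he
  obtain ⟨hab' : G.Adj a' b', hnt' : ¬ t.Adj a' b'⟩ := he'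
  obtain ⟨P, -, hC⟩ := ht.exists_isCycle_cons htG hab hnt
  obtain ⟨P', -, hC'⟩ := ht.exists_isCycle_cons htG hab' hnt'
  obtain ⟨g, hg, hgadj, hfg⟩ := hf.exists_injective_lift_getVertMod hK hC
  obtain ⟨g', hg', hg'adj, hfg'⟩ := hf.exists_injective_lift_getVertMod hK hC'
  refine ⟨g, g', hg, hgadj, hg', hg'adj, fun hsub => ?_⟩
  obtain ⟨m, hm⟩ := hK.exists_sym2_eq_of_range_subset hgadj hg' hg'adj hsub 0
  have hmem : s(a, b) ∈ (Walk.cons hab' (P'.mapLe htG)).edges := by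
    have h0 : f (g 0) = a := (congrFun hfg 0).trans Walk.getVertMod_zero
    have h1 : f (g 1) = b :=
      (congrFun hfg 1).trans ((Walk.getVertMod_one (by simp)).trans (by simp))
    have hs : s(a, b) = s(f (g' m), f (g' (m + 1))) := by
      rw [← h0, ← h1]
      simpa using congrArg (Sym2.map f) hm
    rw [hs, ← Walk.adj_toSubgraph_iff_mem_edges, show f (g' m) = _ from congrFun hfg' m,
      show f (g' (m + 1)) = _ from congrFun hfg' (m + 1)]
    exact Walk.toSubgraph_adj_getVertMod (by simp) m
  rw [Walk.edges_cons, Walk.edges_mapLe_eq_edges, List.mem_cons] at hmem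
  rcases hmem with h | h
  exacts [hne h, hnt (P'.edges_subset_edgeSet h)]

end GraphCoveringMap

/-- A connected finite graph `G` is unicyclic (its number of edges equals its number of
vertices, i.e. it contains exactly one cycle) if and only if its universal cover — any tree
`U` admitting a covering map onto `G` — contains a unique two-way infinite path. -/
theorem unicyclic_iff_unique_infinite_path {V : Type} [Fintype V] (G : SimpleGraph V)
    (hG : G.Connected) (T : Type) (U : SimpleGraph T) (hU : U.IsTree) (f : T → V)
    (hf : GraphCoveringMap U G f) :
    (Nat.card G.edgeSet = Fintype.card V) ↔
      ∃ g : ℤ → T, Function.Injective g ∧ (∀ k : ℤ, U.Adj (g k) (g (k + 1))) ∧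
        ∀ g' : ℤ → T, Function.Injective g' → (∀ k : ℤ, U.Adj (g' k) (g' (k + 1))) →
          Set.range g' = Set.range g := by
  rw [← Nat.card_eq_fintype_card]
  constructor
  · intro hcard
    obtain ⟨t, htG, ht, a, b, hab, hnt, hGt⟩ := hG.exists_isTree_of_card_edgeSet_eq hcard
    obtain ⟨P, hP, hC⟩ := ht.exists_isCycle_cons htG hab hnt
    obtain ⟨g, hg, hgadj, -⟩ := hf.exists_injective_lift_getVertMod hU.isAcyclic hC
    refine ⟨g, hg, hgadj, fun g' hg' hg'adj => Set.Subset.antisymm ?_ ?_⟩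
    · exact hf.range_subset_range_of_isCycle_cons hU.connected ht.isAcyclic htG hab hGt hP hC
        hg hgadj hg' hg'adj
    · exact hf.range_subset_range_of_isCycle_cons hU.connected ht.isAcyclic htG hab hGt hP hC
        hg' hg'adj hg hgadj
  · rintro ⟨g, hg, hgadj, huniq⟩
    have hcyc := (hf.isNonbacktracking_comp (.of_injective hgadj hg)).not_isAcyclic
    refine le_antisymm (not_lt.mp fun hlt => ?_) (hG.card_le_card_edgeSet hcyc)
    obtain ⟨g₁, g₂, hg₁, hg₁adj, hg₂, hg₂adj, hnot⟩ :=
      hf.exists_not_range_subset_of_card_lt hU.isAcyclic hG hlt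
    exact hnot (by rw [huniq g₁ hg₁ hg₁adj, huniq g₂ hg₂ hg₂adj])
end

section
/- Let G and H be graphs, let x be a vertex of the 2-core of G and y a vertex of the 2-core of H, and let T_x (resp. T_y) be the rooted tree hanging at x (resp. y) that meets the 2-core only at its root. If T_x and T_y are not isomorphic as rooted trees, then the final color-refinement colors of x (in G) and y (in H) differ. -/
open SimpleGraph Filter MeasureTheory

/-!
Let `S u v` say that `u` and `v` get the same colour in every round of colour refinement. By
pigeonhole over the finitely many bijections between two neighbourhoods, some single bijection
witnesses the round-`(i+1)` condition for infinitely many `i`, so `S` is a bisimulation: related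
vertices have neighbourhoods matched bijectively by related pairs. The image of a 2-core set under
a bisimulation is again a 2-core set, so `S` respects the 2-core; since `T_x` meets the core only
in `x`, and a non-root vertex of `T_x` has all its neighbours in `T_x`, the relation `S` restricts
to a bisimulation between `T_x` and `T_y` relating `x` to `y`.

A bisimulation between two trees that relates their roots and is difunctional (as `S` is, being
an agreement of colourings) gives a rooted isomorphism. Walking outwards from the root, choose
at each vertex a related image and a neighbourhood bijection; by difunctionality it can be
corrected by a transposition so that it sends the parent to the parent's image. The resulting map
is a local bijection between trees, and a local bijection from a connected graph to a tree is an
isomorphism, because it sends paths to non-backtracking walks, which are paths in a tree.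
-/

def Difunctional {α β : Type*} (R : α → β → Prop) : Prop :=
  ∀ ⦃a a' : α⦄ ⦃b b' : β⦄, R a b → R a' b → R a' b' → R a b'

theorem Difunctional.exists_equiv_apply_eq {α β : Type*} {R : α → β → Prop}
    (hR : Difunctional R) (e : α ≃ β) (he : ∀ a, R a (e a)) {a₁ : α} {b₁ : β} (h : R a₁ b₁) :
    ∃ e' : α ≃ β, (∀ a, R a (e' a)) ∧ e' a₁ = b₁ := by
  classical
  refine ⟨(Equiv.swap a₁ (e.symm b₁)).trans e, fun a => ?_, by simp⟩
  have hb₁ : R (e.symm b₁) b₁ := by simpa using he (e.symm b₁)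
  rcases eq_or_ne a a₁ with rfl | ha₁
  · simpa using h
  rcases eq_or_ne a (e.symm b₁) with rfl | ha₂
  · simpa using hR hb₁ h (he a₁)
  · simpa [Equiv.swap_apply_of_ne_of_ne ha₁ ha₂] using he a

theorem Set.bijOn_of_equiv {α β : Type*} {f : α → β} {s : Set α} {t : Set β} (e : s ≃ t)
    (hf : ∀ a : s, f a = e a) : Set.BijOn f s t := by
  refine ⟨fun a ha => hf ⟨a, ha⟩ ▸ (e ⟨a, ha⟩).2, fun a ha a' ha' h => ?_, fun b hb => ?_⟩
  · rw [hf ⟨a, ha⟩, hf ⟨a', ha'⟩] at h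
    exact congrArg Subtype.val (e.injective (Subtype.ext h))
  · exact ⟨e.symm ⟨b, hb⟩, (e.symm ⟨b, hb⟩).2, by rw [hf, Equiv.apply_symm_apply]⟩

namespace SimpleGraph

variable {A B : Type*} {T₁ : SimpleGraph A} {T₂ : SimpleGraph B}

theorem Walk.IsPath.map_of_injOn_neighborSet (hT₂ : T₂.IsAcyclic) (f : T₁ →g T₂)
    (hf : ∀ v, Set.InjOn f (T₁.neighborSet v)) {u v : A} {p : T₁.Walk u v} (hp : p.IsPath) :
    (p.map f).IsPath := by
  induction p with
  | nil => simp
  | @cons u v w h p ih =>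
    rw [Walk.cons_isPath_iff] at hp
    rw [Walk.map_cons, Walk.cons_isPath_iff]
    refine ⟨ih hp.1, fun hu => ?_⟩
    have hsnd := hT₂.eq_snd_of_adj_start (ih hp.1) (f.map_adj h.symm) hu
    cases p with
    | nil => exact (f.map_adj h).ne (by simpa using hsnd)
    | cons h' q =>
      simp only [Walk.map_cons, Walk.snd_cons] at hsnd
      exact hp.2 (by rw [hf v h.symm h' hsnd]; simp)

theorem injective_of_injOn_neighborSet (hT₁ : T₁.Preconnected) (hT₂ : T₂.IsAcyclic)
    (f : T₁ →g T₂) (hf : ∀ v, Set.InjOn f (T₁.neighborSet v)) : Function.Injective f := by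
  classical
  intro u v huv
  let p := (hT₁ u v).some.bypass
  have hq : (p.map f |>.copy rfl huv.symm).IsPath := by
    rw [Walk.isPath_copy]
    exact Walk.bypass_isPath _ |>.map_of_injOn_neighborSet hT₂ f hf
  have hlen := Walk.length_eq_zero_iff.mpr (Walk.isPath_iff_nil.mp hq)
  rw [Walk.length_copy, Walk.length_map] at hlen
  exact Walk.eq_of_length_eq_zero hlen

theorem surjective_of_neighborSet_subset_image [Nonempty A] (hT₂ : T₂.Preconnected)
    (f : A → B) (hf : ∀ v, T₂.neighborSet (f v) ⊆ f '' T₁.neighborSet v) :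
    Function.Surjective f := by
  have hwalk : ∀ {b c : B}, T₂.Walk b c → b ∈ Set.range f → c ∈ Set.range f := by
    intro b c p
    induction p with
    | nil => exact id
    | cons h _ ih =>
      rintro ⟨a, rfl⟩
      obtain ⟨a', -, ha'⟩ := hf a h
      exact ih ⟨a', ha'⟩
  obtain ⟨a⟩ := ‹Nonempty A›
  exact fun b => hwalk (hT₂ (f a) b).some ⟨a, rfl⟩

theorem exists_iso_of_bijOn_neighborSet (hT₁ : T₁.Connected) (hT₂ : T₂.IsTree) (f : A → B)
    (hf : ∀ v, Set.BijOn f (T₁.neighborSet v) (T₂.neighborSet (f v))) :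
    ∃ φ : T₁ ≃g T₂, ⇑φ = f := by
  let F : T₁ →g T₂ := ⟨f, fun h => (hf _).mapsTo h⟩
  have hinj : Function.Injective f := injective_of_injOn_neighborSet hT₁.preconnected
    hT₂.isAcyclic F fun v => (hf v).injOn
  have : Nonempty A := hT₁.nonempty
  have hsurj : Function.Surjective f := surjective_of_neighborSet_subset_image
    hT₂.connected.preconnected f fun v => (hf v).surjOn
  refine ⟨⟨Equiv.ofBijective f ⟨hinj, hsurj⟩, fun {u v} => ⟨fun h => ?_, fun h => F.map_adj h⟩⟩,
    rfl⟩
  obtain ⟨w, hw, hwv⟩ := (hf u).surjOn h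
  exact hinj hwv ▸ hw

def IsBisimulation (T₁ : SimpleGraph A) (T₂ : SimpleGraph B) (S : A → B → Prop) : Prop :=
  ∀ ⦃a b⦄, S a b → ∃ e : T₁.neighborSet a ≃ T₂.neighborSet b, ∀ z : T₁.neighborSet a, S z (e z)

open Classical in
noncomputable def rootPath (hT : T₁.Connected) (r v : A) : T₁.Walk v r :=
  (hT.preconnected v r).some.bypass

section rootPath

variable (hT : T₁.IsTree) {r : A}

theorem rootPath_isPath (v : A) : (rootPath hT.connected r v).IsPath := by
  classical
  exact Walk.bypass_isPath _

theorem eq_rootPath {v : A} {p : T₁.Walk v r} (hp : p.IsPath) : p = rootPath hT.connected r v :=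
  congrArg Subtype.val
    ((hT.isAcyclic.subsingleton_path v r).elim ⟨p, hp⟩ ⟨_, rootPath_isPath hT v⟩)

theorem rootPath_self : rootPath hT.connected r r = .nil :=
  (eq_rootPath hT .nil).symm

theorem rootPath_eq_cons_or_eq_cons {u v : A} (h : T₁.Adj u v) :
    rootPath hT.connected r u = .cons h (rootPath hT.connected r v) ∨
      rootPath hT.connected r v = .cons h.symm (rootPath hT.connected r u) := by
  by_cases hu : u ∈ (rootPath hT.connected r v).support
  · right
    have hv : v ∉ (rootPath hT.connected r u).support := by
      simpa using hT.isAcyclic.ne_mem_support_of_support_of_adj_of_isPath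
        (rootPath_isPath hT v).reverse (rootPath_isPath hT u).reverse h.symm (by simpa using hu)
    exact (eq_rootPath hT ((rootPath_isPath hT u).cons hv)).symm
  · left
    exact (eq_rootPath hT ((rootPath_isPath hT v).cons hu)).symm

end rootPath

structure LocalMatch (T₁ : SimpleGraph A) (T₂ : SimpleGraph B) (S : A → B → Prop) (a : A) where
  image : B
  rel : S a image
  equiv : T₁.neighborSet a ≃ T₂.neighborSet image
  rel_equiv : ∀ z : T₁.neighborSet a, S z (equiv z)

section LocalMatch

variable {S : A → B → Prop}

theorem LocalMatch.exists_extend (hS : Difunctional S) (hbis : IsBisimulation T₁ T₂ S) {t u : A}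
    (m : LocalMatch T₁ T₂ S t) (h : T₁.Adj u t) :
    ∃ m' : LocalMatch T₁ T₂ S u,
      m'.image = m.equiv ⟨u, h.symm⟩ ∧ (m'.equiv ⟨t, h⟩ : B) = m.image := by
  obtain ⟨e, he⟩ := hbis (m.rel_equiv ⟨u, h.symm⟩)
  obtain ⟨e', he', hte'⟩ := Difunctional.exists_equiv_apply_eq
    (R := fun (z : T₁.neighborSet u) (w : T₂.neighborSet (m.equiv ⟨u, h.symm⟩)) => S z w)
    (fun _ _ _ _ h₁ h₂ h₃ => hS h₁ h₂ h₃) e he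
    (b₁ := ⟨m.image, (m.equiv ⟨u, h.symm⟩).2.symm⟩) (a₁ := ⟨t, h⟩) m.rel
  exact ⟨⟨_, m.rel_equiv ⟨u, h.symm⟩, e', he'⟩, rfl, congrArg Subtype.val hte'⟩

variable (hS : Difunctional S) (hbis : IsBisimulation T₁ T₂ S) {a₀ : A} {b₀ : B} (h₀ : S a₀ b₀)

noncomputable def LocalMatch.alongWalk : ∀ {u : A}, T₁.Walk u a₀ → LocalMatch T₁ T₂ S u
  | _, .nil => ⟨b₀, h₀, (hbis h₀).choose, (hbis h₀).choose_spec⟩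
  | _, .cons h q => (LocalMatch.exists_extend hS hbis (alongWalk q) h).choose

theorem LocalMatch.alongWalk_nil : (alongWalk hS hbis h₀ .nil).image = b₀ := rfl

theorem LocalMatch.alongWalk_image_of_eq_cons {t u : A} (h : T₁.Adj u t) {p : T₁.Walk u a₀}
    {q : T₁.Walk t a₀} (hp : p = .cons h q) :
    (alongWalk hS hbis h₀ p).image = (alongWalk hS hbis h₀ q).equiv ⟨u, h.symm⟩ := by
  subst hp
  exact (exists_extend hS hbis (alongWalk hS hbis h₀ q) h).choose_spec.1

theorem LocalMatch.alongWalk_equiv_of_eq_cons {t u : A} (h : T₁.Adj u t) {p : T₁.Walk u a₀}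
    {q : T₁.Walk t a₀} (hp : p = .cons h q) :
    ((alongWalk hS hbis h₀ p).equiv ⟨t, h⟩ : B) = (alongWalk hS hbis h₀ q).image := by
  subst hp
  exact (exists_extend hS hbis (alongWalk hS hbis h₀ q) h).choose_spec.2

end LocalMatch

theorem IsTree.exists_iso_of_isBisimulation (hT₁ : T₁.IsTree) (hT₂ : T₂.IsTree)
    {S : A → B → Prop} (hS : Difunctional S) (hbis : IsBisimulation T₁ T₂ S) {a₀ : A} {b₀ : B}
    (h₀ : S a₀ b₀) : ∃ φ : T₁ ≃g T₂, φ a₀ = b₀ := by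
  let M v := LocalMatch.alongWalk hS hbis h₀ (rootPath hT₁.connected a₀ v)
  have hM : ∀ v (w : T₁.neighborSet v), (M w).image = (M v).equiv w := by
    rintro v ⟨w, hw⟩
    rcases rootPath_eq_cons_or_eq_cons hT₁ (r := a₀) hw.symm with h | h
    · exact LocalMatch.alongWalk_image_of_eq_cons hS hbis h₀ hw.symm h
    · exact (LocalMatch.alongWalk_equiv_of_eq_cons hS hbis h₀ hw h).symm
  obtain ⟨φ, hφ⟩ := exists_iso_of_bijOn_neighborSet hT₁.connected hT₂ (fun v => (M v).image)
    fun v => Set.bijOn_of_equiv (M v).equiv (hM v)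
  refine ⟨φ, ?_⟩
  simp only [hφ, M, rootPath_self hT₁, LocalMatch.alongWalk_nil]

def neighborSetInduceEquiv (G : SimpleGraph A) (s : Set A) (a : s) :
    (G.induce s).neighborSet a ≃ {z : G.neighborSet a // (z : A) ∈ s} where
  toFun z := ⟨⟨z.1.1, z.2⟩, z.1.2⟩
  invFun z := ⟨⟨z.1.1, z.2⟩, z.1.2⟩

theorem IsBisimulation.induce {R : A → B → Prop} (hR : T₁.IsBisimulation T₂ R) {s : Set A}
    {t : Set B} (hst : ∀ ⦃a b z w⦄, a ∈ s → b ∈ t → R a b → T₁.Adj a z → T₂.Adj b w → R z w →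
      (z ∈ s ↔ w ∈ t)) :
    (T₁.induce s).IsBisimulation (T₂.induce t) (fun a b => R a b) := by
  intro a b hab
  obtain ⟨e, he⟩ := hR hab
  refine ⟨(neighborSetInduceEquiv T₁ s a).trans <|
    (e.subtypeEquiv fun z => hst a.2 b.2 hab z.2 (e z).2 (he z)).trans
    (neighborSetInduceEquiv T₂ t b).symm, fun z => he ⟨z.1.1, z.2⟩⟩

end SimpleGraph

section ColorRefinement

variable {A B C : Type*} {G : SimpleGraph A} {H : SimpleGraph B} {K : SimpleGraph C}

theorem crStep_of_le {i j : ℕ} {u : A} {v : B} (hij : i ≤ j) (h : crStep G H j u v) :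
    crStep G H i u v := by
  induction hij with
  | refl => exact h
  | step _ ih => exact ih h.1

theorem crStep_symm : ∀ {i : ℕ} {u : A} {v : B}, crStep G H i u v → crStep H G i v u
  | 0, _, _, _ => trivial
  | _ + 1, _, _, ⟨h, e, he⟩ =>
    ⟨crStep_symm h, e.symm, fun z => by simpa using crStep_symm (he (e.symm z))⟩

theorem crStep_trans : ∀ {i : ℕ} {u : A} {v : B} {w : C},
    crStep G H i u v → crStep H K i v w → crStep G K i u w
  | 0, _, _, _, _, _ => trivial
  | _ + 1, _, _, _, ⟨h₁, e₁, he₁⟩, ⟨h₂, e₂, he₂⟩ =>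
    ⟨crStep_trans h₁ h₂, e₁.trans e₂, fun z => crStep_trans (he₁ z) (he₂ (e₁ z))⟩

def SameStableColor (G : SimpleGraph A) (H : SimpleGraph B) (u : A) (v : B) : Prop :=
  ∀ i, crStep G H i u v

theorem SameStableColor.symm {u : A} {v : B} (h : SameStableColor G H u v) :
    SameStableColor H G v u :=
  fun i => crStep_symm (h i)

theorem difunctional_sameStableColor : Difunctional (SameStableColor G H) :=
  fun _ _ _ _ h₁ h₂ h₃ i => crStep_trans (crStep_trans (h₁ i) (crStep_symm (h₂ i))) (h₃ i)

theorem isBisimulation_sameStableColor [G.LocallyFinite] :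
    G.IsBisimulation H (SameStableColor G H) := by
  intro u v h
  choose e he using fun i => (h (i + 1)).2
  obtain ⟨e₀, he₀⟩ := Finite.exists_infinite_fiber e
  refine ⟨e₀, fun z j => ?_⟩
  obtain ⟨i, hi, hji⟩ := (Set.infinite_coe_iff.mp he₀).exists_gt j
  exact crStep_of_le hji.le (hi ▸ he i z)

end ColorRefinement

section TwoCore

variable {V W : Type*} {G : SimpleGraph V} {H : SimpleGraph W}

theorem IsTwoCoreSet.subset_twoCore {S : Set V} (hS : IsTwoCoreSet G S) : S ⊆ twoCore G :=
  fun _ hv => Set.mem_sUnion.mpr ⟨S, hS, hv⟩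

theorem isTwoCoreSet_twoCore : IsTwoCoreSet G (twoCore G) := by
  rintro v ⟨S, hS, hv⟩
  obtain ⟨a, b, hab, ha, hb, hva, hvb⟩ := hS v hv
  exact ⟨a, b, hab, hS.subset_twoCore ha, hS.subset_twoCore hb, hva, hvb⟩

theorem IsTwoCoreSet.union_verts {S : Set V} (hS : IsTwoCoreSet G S) (K : G.Subgraph)
    (hK : ∀ v ∈ K.verts, v ∉ S → (K.neighborSet v).ncard = 2) :
    IsTwoCoreSet G (S ∪ K.verts) := by
  intro v hv
  by_cases hvS : v ∈ S
  · obtain ⟨a, b, hab, ha, hb, hva, hvb⟩ := hS v hvS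
    exact ⟨a, b, hab, .inl ha, .inl hb, hva, hvb⟩
  · obtain ⟨a, b, hab, hK₂⟩ := Set.ncard_eq_two.mp (hK v (hv.resolve_left hvS) hvS)
    have ha : K.Adj v a := by simp [← Subgraph.mem_neighborSet, hK₂]
    have hb : K.Adj v b := by simp [← Subgraph.mem_neighborSet, hK₂]
    exact ⟨a, b, hab, .inr ha.snd_mem, .inr hb.snd_mem, ha.adj_sub, hb.adj_sub⟩

theorem SimpleGraph.Walk.IsCycle.support_subset_twoCore {u : V} {p : G.Walk u u}
    (hp : p.IsCycle) : {v | v ∈ p.support} ⊆ twoCore G := by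
  have hK := isTwoCoreSet_twoCore.union_verts p.toSubgraph fun v hv _ =>
    hp.ncard_neighborSet_toSubgraph_eq_two (by simpa using hv)
  exact fun v hv => hK.subset_twoCore (.inr (by simpa using hv))

theorem SimpleGraph.Walk.IsPath.support_subset_twoCore {u v : V} {p : G.Walk u v}
    (hp : p.IsPath) (hu : u ∈ twoCore G) (hv : v ∈ twoCore G) :
    {w | w ∈ p.support} ⊆ twoCore G := by
  suffices hK : IsTwoCoreSet G (twoCore G ∪ p.toSubgraph.verts) from
    fun w hw => hK.subset_twoCore (.inr (by simpa using hw))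
  refine isTwoCoreSet_twoCore.union_verts _ fun w hw hwc => ?_
  obtain ⟨n, rfl, hn⟩ := Walk.mem_support_iff_exists_getVert.mp (by simpa using hw)
  have hn₀ : n ≠ 0 := by rintro rfl; exact hwc (by simpa using hu)
  have hnl : n ≠ p.length := by rintro rfl; exact hwc (by simpa using hv)
  exact hp.ncard_neighborSet_toSubgraph_internal_eq_two hn₀ (by omega)

theorem SimpleGraph.IsBisimulation.mem_twoCore {R : V → W → Prop} (hR : G.IsBisimulation H R)
    {u : V} {v : W} (h : R u v) (hu : u ∈ twoCore G) : v ∈ twoCore H := by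
  refine IsTwoCoreSet.subset_twoCore (S := {w | ∃ u ∈ twoCore G, R u w}) ?_ ⟨u, hu, h⟩
  rintro w ⟨u', hu', hw⟩
  obtain ⟨a, b, hab, ha, hb, hua, hub⟩ := isTwoCoreSet_twoCore u' hu'
  obtain ⟨e, he⟩ := hR hw
  refine ⟨e ⟨a, hua⟩, e ⟨b, hub⟩, fun h => hab ?_, ⟨a, ha, he ⟨a, hua⟩⟩, ⟨b, hb, he ⟨b, hub⟩⟩,
    (e ⟨a, hua⟩).2, (e ⟨b, hub⟩).2⟩
  exact congrArg Subtype.val (e.injective (Subtype.ext h))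

theorem SameStableColor.mem_twoCore_iff [G.LocallyFinite] [H.LocallyFinite] {u : V} {v : W}
    (h : SameStableColor G H u v) : u ∈ twoCore G ↔ v ∈ twoCore H :=
  ⟨isBisimulation_sameStableColor.mem_twoCore h,
    isBisimulation_sameStableColor.mem_twoCore h.symm⟩

end TwoCore

section TreeSet

variable {V : Type*} {G : SimpleGraph V} {x : V}

theorem eq_or_notMem_twoCore_of_mem_treeSet {v : V} (hv : v ∈ treeSet G x) :
    v = x ∨ v ∉ twoCore G :=
  let ⟨w, hw⟩ := hv
  hw v w.end_mem_support

theorem mem_treeSet_of_mem_support {v : V} {w : G.Walk x v}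
    (hw : ∀ z ∈ w.support, z = x ∨ z ∉ twoCore G) {z : V} (hz : z ∈ w.support) :
    z ∈ treeSet G x := by
  classical
  exact ⟨w.takeUntil z hz, fun t ht => hw t (w.support_takeUntil_subset_support hz ht)⟩

theorem mem_treeSet_of_adj {v z : V} (hv : v ∈ treeSet G x) (hadj : G.Adj v z)
    (hz : z ∉ twoCore G) : z ∈ treeSet G x := by
  obtain ⟨w, hw⟩ := hv
  refine ⟨w.concat hadj, fun t ht => ?_⟩
  rw [Walk.support_concat, List.mem_append, List.mem_singleton] at ht
  exact ht.elim (hw t) fun ht => .inr (ht ▸ hz)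

theorem eq_of_mem_treeSet_of_adj_mem_twoCore (hx : x ∈ twoCore G) {v c : V}
    (hv : v ∈ treeSet G x) (hvx : v ≠ x) (hadj : G.Adj v c) (hc : c ∈ twoCore G) : c = x := by
  classical
  by_contra hcx
  obtain ⟨w, hw⟩ := hv
  have hP : ∀ z ∈ w.bypass.support, z = x ∨ z ∉ twoCore G :=
    fun z hz => hw z (w.support_bypass_subset_support hz)
  have hcP : c ∉ w.bypass.support := fun hcP => (hP c hcP).elim hcx (· hc)
  -- the path from `x` through `v` to `c` joins two core vertices, so it lies in the core
  have hvc : v ∈ twoCore G := (w.bypass_isPath.concat hcP hadj).support_subset_twoCore hx hc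
    (by simp [Walk.support_concat])
  exact (hP v w.bypass.end_mem_support).resolve_left hvx hvc

theorem mem_twoCore_iff_eq_of_mem_treeSet (hx : x ∈ twoCore G) {v : V}
    (hv : v ∈ treeSet G x) : v ∈ twoCore G ↔ v = x :=
  ⟨fun hvc => (eq_or_notMem_twoCore_of_mem_treeSet hv).resolve_right (· hvc), (· ▸ hx)⟩

theorem adj_mem_treeSet_iff (hx : x ∈ twoCore G) {v z : V} (hv : v ∈ treeSet G x)
    (hadj : G.Adj v z) : z ∈ treeSet G x ↔ (v = x → z ∉ twoCore G) := by
  refine ⟨fun hz hvx hzc => hadj.ne ?_, fun h => ?_⟩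
  · rw [hvx, (mem_twoCore_iff_eq_of_mem_treeSet hx hz).mp hzc]
  by_cases hzc : z ∈ twoCore G
  · by_cases hvx : v = x
    · exact absurd hzc (h hvx)
    · exact eq_of_mem_treeSet_of_adj_mem_twoCore hx hv hvx hadj hzc ▸ mem_treeSet_self G x
  · exact mem_treeSet_of_adj hv hadj hzc

theorem isAcyclic_induce_treeSet : (G.induce (treeSet G x)).IsAcyclic := by
  intro u c hc
  let f := Embedding.induce (G := G) (treeSet G x)
  have hcore : ∀ z ∈ c.support, (z : V) ∈ twoCore G := fun z hz =>
    (hc.map (f := f.toHom) f.injective).support_subset_twoCore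
      (show (z : V) ∈ (c.map f.toHom).support from
        Walk.support_map f.toHom c ▸ List.mem_map_of_mem hz)
  have hx : ∀ z ∈ c.support, (z : V) = x := fun z hz =>
    (eq_or_notMem_twoCore_of_mem_treeSet z.2).resolve_right (· (hcore z hz))
  exact (c.adj_snd hc.not_nil).ne
    (Subtype.ext ((hx _ c.start_mem_support).trans (hx _ (c.getVert_mem_support 1)).symm))

theorem isTree_induce_treeSet : (G.induce (treeSet G x)).IsTree where
  connected := induce_connected_of_patches x (mem_treeSet_self G x) fun hv => by
    obtain ⟨w, hw⟩ := hv
    exact ⟨{z | z ∈ w.support}, fun z hz => mem_treeSet_of_mem_support hw hz,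
      w.start_mem_support, w.end_mem_support, w.connected_induce_support.preconnected _ _⟩
  isAcyclic := isAcyclic_induce_treeSet

end TreeSet

/-- If `x` is in the 2-core of `G`, `y` is in the 2-core of `H`, and the rooted trees `T_x`
and `T_y` hanging at them are non-isomorphic, then colour refinement (run jointly on `G`
and `H`) assigns `x` and `y` different stable colours. -/
theorem pendant_tree_distinguishes {V W : Type} [Fintype V] [Fintype W]
    (G : SimpleGraph V) (H : SimpleGraph W) (x : V) (y : W)
    (hx : x ∈ twoCore G) (hy : y ∈ twoCore H) (h : ¬ RootedTreeIso G x H y) :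
    ¬ ∀ i : ℕ, crStep G H i x y := by
  classical
  intro hxy
  let S (a : treeSet G x) (b : treeSet H y) : Prop := SameStableColor G H a b
  have hS : Difunctional S := fun _ _ _ _ h₁ h₂ h₃ => difunctional_sameStableColor h₁ h₂ h₃
  have hbis : (G.induce (treeSet G x)).IsBisimulation (H.induce (treeSet H y)) S :=
    isBisimulation_sameStableColor.induce fun a b z w ha hb hab haz hbw hzw => by
      have hroot : a = x ↔ b = y := (mem_twoCore_iff_eq_of_mem_treeSet hx ha).symm.trans <|
        hab.mem_twoCore_iff.trans (mem_twoCore_iff_eq_of_mem_treeSet hy hb)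
      rw [adj_mem_treeSet_iff hx ha haz, adj_mem_treeSet_iff hy hb hbw, hroot,
        hzw.mem_twoCore_iff]
  exact h (isTree_induce_treeSet.exists_iso_of_isBisimulation isTree_induce_treeSet hS hbis
    (a₀ := ⟨x, mem_treeSet_self G x⟩) (b₀ := ⟨y, mem_treeSet_self H y⟩) hxy)
end

section
/- Let G and H be graphs (possibly equal), u a vertex of G and v a vertex of H. If u and v receive the same stable color under color refinement run jointly on G and H, then u belongs to the 2-core of G if and only if v belongs to the 2-core of H. -/
open SimpleGraph Filter MeasureTheory

/-!
The 2-core is the greatest fixed point of the monotone operator keeping the vertices with two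
distinct neighbours in a given set; on a finite graph it is reached by iterating this operator
from the full vertex set. The `i`-th iterate is invariant under `C_i`-colour equality, because
a colour-preserving bijection of neighbourhoods transports two distinct surviving neighbours.
-/

theorem OrderHom.gfp_le_iterate_top {α : Type*} [CompleteLattice α] (f : α →o α) (n : ℕ) :
    f.gfp ≤ f^[n] ⊤ := by
  induction n with
  | zero => exact le_top
  | succ n ih =>
    rw [Function.iterate_succ_apply', ← f.map_gfp]
    exact f.monotone ih

theorem OrderHom.gfp_eq_iInf_iterate_top {α : Type*} [CompleteLattice α] [WellFoundedLT α]
    (f : α →o α) : f.gfp = ⨅ n, f^[n] ⊤ := by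
  refine le_antisymm (le_iInf f.gfp_le_iterate_top) ?_
  have hanti : Antitone fun n ↦ f^[n] ⊤ :=
    antitone_nat_of_succ_le fun n ↦ by
      rw [Function.iterate_succ_apply]
      exact f.monotone.iterate n le_top
  obtain ⟨N, hN⟩ := WellFoundedLT.antitone_chain_condition hanti
  have hfix : f (f^[N] ⊤) = f^[N] ⊤ := by
    rw [← Function.iterate_succ_apply' f N, ← hN (N + 1) N.le_succ]
  exact (iInf_le _ N).trans (f.le_gfp hfix.ge)

def coreStep {V : Type*} (G : SimpleGraph V) : Set V →o Set V where
  toFun S := {v | ∃ a b, a ≠ b ∧ a ∈ S ∧ b ∈ S ∧ G.Adj v a ∧ G.Adj v b}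
  monotone' _ _ hST := fun _ ⟨a, b, hab, ha, hb, hva, hvb⟩ ↦
    ⟨a, b, hab, hST ha, hST hb, hva, hvb⟩

theorem twoCore_eq_gfp_coreStep {V : Type*} (G : SimpleGraph V) :
    twoCore G = (coreStep G).gfp :=
  rfl

theorem mem_coreStep_of_embedding {V W : Type*} {G : SimpleGraph V} {H : SimpleGraph W}
    {S : Set V} {T : Set W} {u : V} {v : W} (e : G.neighborSet u ↪ H.neighborSet v)
    (he : ∀ x : G.neighborSet u, (x : V) ∈ S → (e x : W) ∈ T) (hu : u ∈ coreStep G S) :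
    v ∈ coreStep H T := by
  obtain ⟨a, b, hab, ha, hb, hua, hub⟩ := hu
  refine ⟨e ⟨a, hua⟩, e ⟨b, hub⟩, ?_, he _ ha, he _ hb, (e _).2, (e _).2⟩
  exact fun h ↦ hab (congrArg Subtype.val (e.injective (Subtype.ext h)))

theorem mem_coreStep_iff_of_equiv {V W : Type*} {G : SimpleGraph V} {H : SimpleGraph W}
    {S : Set V} {T : Set W} {u : V} {v : W} (e : G.neighborSet u ≃ H.neighborSet v)
    (he : ∀ x : G.neighborSet u, (x : V) ∈ S ↔ (e x : W) ∈ T) :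
    u ∈ coreStep G S ↔ v ∈ coreStep H T := by
  refine ⟨mem_coreStep_of_embedding e.toEmbedding fun x ↦ (he x).1,
    mem_coreStep_of_embedding e.symm.toEmbedding fun y hy ↦ ?_⟩
  exact (he (e.symm y)).2 (by simpa using hy)

theorem crStep_mem_iterate_coreStep_iff {V W : Type*} {G : SimpleGraph V} {H : SimpleGraph W}
    (i : ℕ) {u : V} {v : W} (h : crStep G H i u v) :
    u ∈ (coreStep G)^[i] Set.univ ↔ v ∈ (coreStep H)^[i] Set.univ := by
  induction i generalizing u v with
  | zero => simp
  | succ i ih =>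
    obtain ⟨-, e, he⟩ := h
    simp only [Function.iterate_succ_apply']
    exact mem_coreStep_iff_of_equiv e fun x ↦ ih (he x)

/-- If `u ∈ G` and `v ∈ H` receive the same stable colour under colour refinement run
jointly on `G` and `H`, then `u` belongs to the 2-core of `G` iff `v` belongs to the
2-core of `H`. -/
theorem crStable_core_iff {V W : Type} [Fintype V] [Fintype W]
    (G : SimpleGraph V) (H : SimpleGraph W) (u : V) (v : W)
    (h : ∀ i : ℕ, crStep G H i u v) :
    u ∈ twoCore G ↔ v ∈ twoCore H := by
  simp only [twoCore_eq_gfp_coreStep, OrderHom.gfp_eq_iInf_iterate_top, Set.iInf_eq_iInter,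
    Set.top_eq_univ, Set.mem_iInter]
  exact forall_congr' fun i ↦ crStep_mem_iterate_coreStep_iff i (h i)
end

section
/- Fix a constant γ > 1. If p = p(n) satisfies np ≤ γ, then there exists ε = ε(γ) > 0 such that with high probability the Erdős–Rényi random graph G(n,p) contains no connected subgraph on at most ε·ln(n) vertices whose number of edges exceeds its number of vertices. -/
open SimpleGraph Filter MeasureTheory
open scoped ENNReal

/-- The Erdős–Rényi measure on edge-indicator functions: each pair of vertices is an edge
independently with probability `p` (here `p ≤ 1` in all uses; `min p 1` only guards the
definition). -/
noncomputable def erMeasure (n : ℕ) (p : ℝ≥0∞) : Measure (Sym2 (Fin n) → Bool) :=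
  Measure.pi fun _ => (PMF.bernoulli (min p 1).toNNReal
    ((ENNReal.toNNReal_mono ENNReal.one_ne_top (min_le_right p 1)).trans_eq ENNReal.toNNReal_one)).toMeasure

/-- The random graph determined by an edge-indicator function `ω`. -/
def sampleGraph (n : ℕ) (ω : Sym2 (Fin n) → Bool) : SimpleGraph (Fin n) :=
  SimpleGraph.fromRel fun u v => ω s(u, v) = true

/-!
A connected graph on `m` vertices with more than `m` edges contains a spanning tree plus two
further edges, `m + 1` edges in all. Rooting the tree, it is determined by its parent map, so `K_n`
contains at most `C(n, m) · m^m · (m + 1)^4` such edge sets on `m` vertices, each present in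
`G(n, p)` with probability at most `(γ / n)^(m + 1)`. As `C(n, m) · m^m ≤ (e n)^m` and
`(m + 1)^4 ≤ e^(4m)`, the union bound over `m ≤ N = ⌊ε ln n⌋` is at most
`(N + 1) (γ / n) (e^5 γ)^N ≤ (γ / n) (e^6 γ)^N ≤ γ / √n` for `ε = 1 / (2 ln (e^6 γ))`.
-/

open Finset

theorem SimpleGraph.Reachable.exists_adj_dist_lt {V : Type*} {G : SimpleGraph V} {u v : V}
    (h : G.Reachable u v) (hne : u ≠ v) : ∃ w, G.Adj u w ∧ G.dist w v < G.dist u v := by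
  obtain ⟨p, hp⟩ := h.exists_walk_length_eq_dist
  cases p with
  | nil => exact absurd rfl hne
  | cons hadj q => exact ⟨_, hadj, hp ▸ (dist_le q).trans_lt (by simp)⟩

namespace SimpleGraph.Subgraph

variable {V : Type*} {G : SimpleGraph V} {H : G.Subgraph}

theorem Connected.reachable_spanningCoe (hH : H.Connected) {u v : V} (hu : u ∈ H.verts)
    (hv : v ∈ H.verts) : H.spanningCoe.Reachable u v :=
  (hH.coe.preconnected ⟨u, hu⟩ ⟨v, hv⟩).map ⟨Subtype.val, id⟩

theorem Connected.exists_parent_map (hH : H.Connected) {r : V} (hr : r ∈ H.verts) :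
    ∃ par : V → V, (∀ v, par v = v ↔ v ∉ H.verts ∨ v = r) ∧
      ∀ v, par v ≠ v → H.Adj v (par v) ∧ H.spanningCoe.dist (par v) r < H.spanningCoe.dist v r := by
  have (v : V) : ∃ w, (v ∈ H.verts ∧ v ≠ r → H.Adj v w ∧
      H.spanningCoe.dist w r < H.spanningCoe.dist v r) ∧ (¬(v ∈ H.verts ∧ v ≠ r) → w = v) := by
    by_cases hv : v ∈ H.verts ∧ v ≠ r
    · obtain ⟨w, hw⟩ := (hH.reachable_spanningCoe hv.1 hr).exists_adj_dist_lt hv.2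
      exact ⟨w, fun _ => hw, fun h => absurd hv h⟩
    · exact ⟨v, fun h => absurd h hv, fun _ => rfl⟩
  choose par hpar using this
  have hfix (v : V) : par v = v ↔ v ∉ H.verts ∨ v = r := by
    by_cases hv : v ∈ H.verts ∧ v ≠ r
    · simpa [hv] using ((hpar v).1 hv).1.adj_sub.ne'
    · simpa [(hpar v).2 hv, or_iff_not_and_not] using hv
  refine ⟨par, hfix, fun v hv => (hpar v).1 ?_⟩
  simpa [or_iff_not_and_not] using mt (hfix v).2 hv

end SimpleGraph.Subgraph

section TreePlusTwo

variable {V : Type*} [Fintype V] [DecidableEq V]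

def treeEdges (par : V → V) : Finset (Sym2 V) :=
  ({v | par v ≠ v} : Finset V).image fun v => s(v, par v)

theorem card_treeEdges {par : V → V} (d : V → ℕ) (hd : ∀ v, par v ≠ v → d (par v) < d v) :
    #(treeEdges par) = #{v | par v ≠ v} := by
  refine card_image_of_injOn fun u hu v hv huv => ?_
  simp only [coe_filter, mem_univ, true_and, Set.mem_ofPred_eq] at hu hv
  rcases Sym2.eq_iff.mp huv with ⟨h, -⟩ | ⟨h₁, h₂⟩
  · exact h
  -- two vertices that are each other's parent would have to decrease `d` both ways
  · have := h₂ ▸ hd u hu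
    have := h₁ ▸ hd v hv
    omega

def parentMaps (S : Finset V) : Finset (V → V) :=
  Fintype.piFinset fun v => if v ∈ S then S else {v}

theorem card_parentMaps (S : Finset V) : #(parentMaps S) = #S ^ #S := by
  simp [parentMaps, Fintype.card_piFinset, apply_ite card, prod_ite_mem]

/-- Spanning trees of `S`, through their parent maps, plus two more edges: `#S + 1` edges in all. -/
def treePlusTwoEdgeSets (S : Finset V) : Finset (Finset (Sym2 V)) :=
  {F ∈ (parentMaps S ×ˢ S.sym2 ×ˢ S.sym2).image fun c => treeEdges c.1 ∪ {c.2.1, c.2.2} |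
    #F = #S + 1}

theorem card_treePlusTwoEdgeSets_le (S : Finset V) :
    #(treePlusTwoEdgeSets S) ≤ #S ^ #S * (#S + 1) ^ 4 := by
  calc #(treePlusTwoEdgeSets S) ≤ #(parentMaps S ×ˢ S.sym2 ×ˢ S.sym2) :=
        (card_filter_le _ _).trans card_image_le
    _ = #S ^ #S * (#S + 1).choose 2 ^ 2 := by
        rw [card_product, card_product, card_parentMaps, card_sym2, sq]
    _ ≤ #S ^ #S * ((#S + 1) ^ 2) ^ 2 := by gcongr; exact Nat.choose_le_pow _ _
    _ = #S ^ #S * (#S + 1) ^ 4 := by ring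

end TreePlusTwo

namespace SimpleGraph.Subgraph

variable {V : Type*} [Fintype V] [DecidableEq V] {G : SimpleGraph V} {H : G.Subgraph}

theorem Connected.exists_treeEdges (hH : H.Connected) {S : Finset V}
    (hS : (S : Set V) = H.verts) :
    ∃ par ∈ parentMaps S, (treeEdges par : Set (Sym2 V)) ⊆ H.edgeSet ∧
      #(treeEdges par) + 1 = #S := by
  obtain ⟨r, hr⟩ := hH.nonempty
  obtain ⟨par, hfix, hpar⟩ := hH.exists_parent_map hr
  have hmem (v : V) : v ∈ S ↔ v ∈ H.verts := by rw [← hS, mem_coe]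
  refine ⟨par, Fintype.mem_piFinset.mpr fun v => ?_, ?_, ?_⟩
  · by_cases hv : par v = v
    · rw [hv]
      split_ifs <;> simp_all
    · have := (hpar v hv).1
      simp [(hmem v).mpr (H.edge_vert this), (hmem _).mpr (H.edge_vert this.symm)]
  · simp only [treeEdges, coe_image, Set.image_subset_iff]
    intro v hv
    exact (hpar v (by simpa using hv)).1
  · have : ({v | par v ≠ v} : Finset V) = S.erase r := by
      ext v
      simp [hfix, hmem]
      tauto
    rw [card_treeEdges (H.spanningCoe.dist · r) fun v hv => (hpar v hv).2, this,
      card_erase_add_one ((hmem r).mpr hr)]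

theorem Connected.exists_mem_treePlusTwoEdgeSets (hH : H.Connected) {S : Finset V}
    (hS : (S : Set V) = H.verts) (hE : #S < H.edgeSet.ncard) :
    ∃ F ∈ treePlusTwoEdgeSets S, (F : Set (Sym2 V)) ⊆ H.edgeSet := by
  obtain ⟨par, hpar, hT, hTcard⟩ := hH.exists_treeEdges hS
  obtain ⟨a, b, ⟨ha, haT⟩, ⟨hb, hbT⟩, hab⟩ :=
    (Set.one_lt_ncard_iff (Set.toFinite _)).mp
      (by rw [Set.ncard_sdiff hT, Set.ncard_coe_finset]; omega :
        1 < (H.edgeSet \ treeEdges par).ncard)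
  have hsym2 {e : Sym2 V} (he : e ∈ H.edgeSet) : e ∈ S.sym2 :=
    mem_sym2_iff.mpr fun v hv => by rw [← mem_coe, hS]; exact H.mem_verts_of_mem_edge he hv
  refine ⟨treeEdges par ∪ {a, b}, mem_filter.mpr ⟨mem_image.mpr
    ⟨(par, a, b), mem_product.mpr ⟨hpar, mem_product.mpr ⟨hsym2 ha, hsym2 hb⟩⟩, rfl⟩, ?_⟩, ?_⟩
  · rw [card_union_of_disjoint (by simp_all), card_pair hab]
    omega
  · simp only [coe_union, coe_pair, Set.union_subset_iff, Set.insert_subset_iff,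
      Set.singleton_subset_iff]
    exact ⟨hT, ha, hb⟩

end SimpleGraph.Subgraph

theorem apply_eq_true_of_mem_edgeSet_sampleGraph {n : ℕ} {ω : Sym2 (Fin n) → Bool}
    {e : Sym2 (Fin n)} (he : e ∈ (sampleGraph n ω).edgeSet) : ω e = true := by
  induction e with
  | _ u v =>
    rw [mem_edgeSet, sampleGraph, fromRel_adj] at he
    exact he.2.elim id fun h => Sym2.eq_swap ▸ h

instance (n : ℕ) (p : ℝ≥0∞) : IsProbabilityMeasure (erMeasure n p) := by
  unfold erMeasure; infer_instance

theorem erMeasure_forall_mem_eq_true (n : ℕ) (p : ℝ≥0∞) (F : Finset (Sym2 (Fin n))) :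
    erMeasure n p {ω | ∀ e ∈ F, ω e = true} = min p 1 ^ #F := by
  have hcyl : {ω : Sym2 (Fin n) → Bool | ∀ e ∈ F, ω e = true} =
      Set.univ.pi fun e => if e ∈ F then {true} else Set.univ := by
    ext ω
    simp only [Set.mem_ofPred_eq, Set.mem_pi, Set.mem_univ, forall_true_left]
    refine forall_congr' fun e => ?_
    split_ifs <;> simp_all
  rw [hcyl, erMeasure, Measure.pi_pi]
  simp only [apply_ite, measure_univ, PMF.bernoulli_apply, cond_true,
    PMF.toMeasure_apply_singleton _ _ (measurableSet_singleton _)]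
  rw [prod_ite_mem, univ_inter, prod_const,
    ENNReal.coe_toNNReal (ne_top_of_le_ne_top ENNReal.one_ne_top (min_le_right p 1))]

theorem erMeasure_exists_complex_subgraph_le (n N : ℕ) (p : ℝ≥0∞) :
    erMeasure n p {ω | ∃ H : (sampleGraph n ω).Subgraph, H.Connected ∧ H.verts.ncard ≤ N ∧
        H.verts.ncard < H.edgeSet.ncard} ≤
      ∑ m ∈ range (N + 1), ((n.choose m * (m ^ m * (m + 1) ^ 4) : ℕ) : ℝ≥0∞) * p ^ (m + 1) := by
  calc _ ≤ erMeasure n p (⋃ m ∈ range (N + 1), ⋃ S ∈ powersetCard m univ,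
        ⋃ F ∈ treePlusTwoEdgeSets S, {ω | ∀ e ∈ F, ω e = true}) := by
        refine measure_mono fun ω ⟨H, hH, hN, hE⟩ => ?_
        set S := H.verts.toFinite.toFinset
        have hS : (S : Set (Fin n)) = H.verts := by simp [S]
        rw [← hS, Set.ncard_coe_finset] at hN hE
        obtain ⟨F, hF, hFH⟩ := hH.exists_mem_treePlusTwoEdgeSets hS hE
        simp only [Set.mem_iUnion]
        exact ⟨_, mem_range_succ_iff.mpr hN, _, mem_powersetCard_univ.mpr rfl, F, hF,
          fun e he => apply_eq_true_of_mem_edgeSet_sampleGraph (H.edgeSet_subset (hFH he))⟩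
    _ ≤ ∑ m ∈ range (N + 1), ∑ S ∈ powersetCard m univ, ∑ F ∈ treePlusTwoEdgeSets S,
          erMeasure n p {ω | ∀ e ∈ F, ω e = true} :=
        (measure_biUnion_finset_le _ _).trans <| sum_le_sum fun _ _ =>
          (measure_biUnion_finset_le _ _).trans <| sum_le_sum fun _ _ =>
            measure_biUnion_finset_le _ _
    _ ≤ ∑ m ∈ range (N + 1), ∑ S ∈ powersetCard m univ,
          ((m ^ m * (m + 1) ^ 4 : ℕ) : ℝ≥0∞) * p ^ (m + 1) := by
        gcongr with m _ S hS
        rw [mem_powersetCard_univ] at hS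
        calc ∑ F ∈ treePlusTwoEdgeSets S, erMeasure n p {ω | ∀ e ∈ F, ω e = true}
            = #(treePlusTwoEdgeSets S) * min p 1 ^ (m + 1) := by
              rw [← nsmul_eq_mul, ← sum_const]
              refine sum_congr rfl fun F hF => ?_
              rw [erMeasure_forall_mem_eq_true, (mem_filter.mp hF).2, hS]
          _ ≤ ((m ^ m * (m + 1) ^ 4 : ℕ) : ℝ≥0∞) * p ^ (m + 1) := by
              gcongr
              · exact_mod_cast hS ▸ card_treePlusTwoEdgeSets_le S
              · exact min_le_left p 1
    _ = _ := by
        simp only [sum_const, card_powersetCard, card_univ, Fintype.card_fin, nsmul_eq_mul]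
        push_cast
        simp only [mul_assoc]

theorem sum_natCast_mul_pow_le_ofReal (s : Finset ℕ) (c k : ℕ → ℕ) {p : ℝ≥0∞} {q : ℝ}
    (hq : 0 ≤ q) (hp : p ≤ ENNReal.ofReal q) :
    ∑ m ∈ s, (c m : ℝ≥0∞) * p ^ k m ≤ ENNReal.ofReal (∑ m ∈ s, (c m : ℝ) * q ^ k m) := by
  rw [ENNReal.ofReal_sum_of_nonneg fun _ _ => by positivity]
  gcongr with m
  rw [ENNReal.ofReal_mul (Nat.cast_nonneg _), ENNReal.ofReal_natCast, ENNReal.ofReal_pow hq]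
  gcongr

open Real

theorem choose_mul_pow_self_le (n m : ℕ) : (n.choose m : ℝ) * m ^ m ≤ n ^ m * exp m :=
  calc (n.choose m : ℝ) * m ^ m ≤ n ^ m / m.factorial * m ^ m := by
        gcongr; exact Nat.choose_le_pow_div m n
    _ = n ^ m * (m ^ m / m.factorial) := by ring
    _ ≤ n ^ m * exp m := by gcongr; exact pow_div_factorial_le_exp _ (Nat.cast_nonneg m) m

theorem choose_mul_pow_mul_div_pow_le {γ : ℝ} (hγ : 0 ≤ γ) {n : ℕ} (hn : 0 < n) (m : ℕ) :
    ((n.choose m * (m ^ m * (m + 1) ^ 4) : ℕ) : ℝ) * (γ / n) ^ (m + 1) ≤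
      γ / n * (exp 5 * γ) ^ m := by
  have hn' : (n : ℝ) ≠ 0 := Nat.cast_ne_zero.mpr hn.ne'
  calc ((n.choose m * (m ^ m * (m + 1) ^ 4) : ℕ) : ℝ) * (γ / n) ^ (m + 1)
      = (n.choose m * m ^ m : ℝ) * (m + 1) ^ 4 * (γ / n) ^ (m + 1) := by push_cast; ring
    _ ≤ (n ^ m * exp m) * exp m ^ 4 * (γ / n) ^ (m + 1) := by
        gcongr ?_ * ?_ * _
        · exact choose_mul_pow_self_le n m
        · exact pow_le_pow_left₀ (by positivity) (add_one_le_exp _) 4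
    _ = γ / n * (exp 5 * γ) ^ m := by
        rw [mul_pow, ← exp_nat_mul, ← exp_nat_mul, show (m : ℝ) * 5 = m + 4 * m by ring, exp_add,
          pow_succ', div_pow]
        push_cast
        field_simp

theorem pow_le_sqrt_of_mul_log_le {K : ℝ} (hK : 0 < K) {N n : ℕ} (hn : 0 < n)
    (h : N * (2 * log K) ≤ log n) : K ^ N ≤ √n := by
  rw [le_sqrt (by positivity) (Nat.cast_nonneg n), ← pow_mul, ← exp_log hK, ← exp_nat_mul,
    ← exp_log (Nat.cast_pos.mpr hn : (0 : ℝ) < n)]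
  push_cast
  exact exp_le_exp.mpr (by linarith)

theorem sum_choose_mul_pow_mul_div_pow_le {γ : ℝ} (hγ : 1 ≤ γ) {n N : ℕ} (hn : 0 < n)
    (hN : N * (2 * log (exp 6 * γ)) ≤ log n) :
    ∑ m ∈ range (N + 1), ((n.choose m * (m ^ m * (m + 1) ^ 4) : ℕ) : ℝ) * (γ / n) ^ (m + 1) ≤
      γ / √n := by
  have hbase : 1 ≤ exp 5 * γ := one_le_mul_of_one_le_of_one_le (one_le_exp (by norm_num)) hγ
  calc _ ≤ ∑ m ∈ range (N + 1), γ / n * (exp 5 * γ) ^ N :=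
        sum_le_sum fun m hm => (choose_mul_pow_mul_div_pow_le (by linarith) hn m).trans <| by
          gcongr
          exact mem_range_succ_iff.mp hm
    _ = (N + 1) * (γ / n * (exp 5 * γ) ^ N) := by simp
    _ ≤ exp N * (γ / n * (exp 5 * γ) ^ N) := by gcongr; exact add_one_le_exp _
    _ = γ / n * (exp 6 * γ) ^ N := by
        rw [show exp 6 = exp 1 * exp 5 by rw [← exp_add]; norm_num, ← exp_one_pow]
        ring
    _ ≤ γ / n * √n := by
        gcongr
        exact pow_le_sqrt_of_mul_log_le (by positivity) hn hN
    _ = γ / √n := by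
        rw [div_mul_eq_mul_div, mul_div_assoc, sqrt_div_self', mul_one_div]

theorem tendsto_measure_nhds_one_of_compl_le {Ω : ℕ → Type*} [∀ n, MeasurableSpace (Ω n)]
    (μ : ∀ n, Measure (Ω n)) [∀ n, IsProbabilityMeasure (μ n)] {s : ∀ n, Set (Ω n)} {b : ℕ → ℝ}
    (hb : Tendsto b atTop (nhds 0)) (h : ∀ᶠ n in atTop, μ n (s n)ᶜ ≤ ENNReal.ofReal (b n)) :
    Tendsto (fun n => μ n (s n)) atTop (nhds 1) := by
  have hlow : Tendsto (fun n => 1 - ENNReal.ofReal (b n)) atTop (nhds 1) := by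
    have := ENNReal.Tendsto.sub (tendsto_const_nhds (x := 1)) (ENNReal.tendsto_ofReal hb)
      (Or.inl ENNReal.one_ne_top)
    rwa [ENNReal.ofReal_zero, tsub_zero] at this
  refine tendsto_of_tendsto_of_tendsto_of_le_of_le' hlow tendsto_const_nhds ?_
    (Eventually.of_forall fun _ => prob_le_one)
  filter_upwards [h] with n hn
  calc 1 - ENNReal.ofReal (b n) ≤ 1 - μ n (s n)ᶜ := tsub_le_tsub_left hn 1
    _ ≤ μ n (s n) := tsub_le_iff_right.mpr (measure_univ (μ := μ n) ▸ measure_univ_le_add_compl _)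

theorem no_small_complex_subgraphs_general (γ : ℝ) (hγ : 1 < γ) (p : ℕ → ℝ≥0∞)
    (hpγ : ∀ n : ℕ, p n * n ≤ ENNReal.ofReal γ) :
    ∃ ε : ℝ, 0 < ε ∧
      Tendsto
        (fun n : ℕ =>
          erMeasure n (p n)
            {ω | ∀ Hs : (sampleGraph n ω).Subgraph, Hs.Connected →
                (Hs.verts.ncard : ℝ) ≤ ε * Real.log n →
                Nat.card Hs.edgeSet ≤ Hs.verts.ncard})
        atTop (nhds 1) := by
  have hK : 0 < log (exp 6 * γ) := log_pos <| one_lt_mul_of_le_of_lt (one_le_exp (by norm_num)) hγ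
  refine ⟨1 / (2 * log (exp 6 * γ)), by positivity, ?_⟩
  refine tendsto_measure_nhds_one_of_compl_le _ (b := fun n => γ / √n)
    (tendsto_const_nhds.div_atTop (tendsto_sqrt_atTop.comp tendsto_natCast_atTop_atTop)) ?_
  filter_upwards [eventually_gt_atTop 0] with n hn
  set N := ⌊1 / (2 * log (exp 6 * γ)) * log n⌋₊
  have hp : p n ≤ ENNReal.ofReal (γ / n) := by
    rw [ENNReal.ofReal_div_of_pos (Nat.cast_pos.mpr hn), ENNReal.ofReal_natCast]
    exact (ENNReal.le_div_iff_mul_le (Or.inl (by simpa using hn.ne')) (Or.inl (by simp))).mpr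
      (hpγ n)
  have hN : N * (2 * log (exp 6 * γ)) ≤ log n := by
    rw [← le_div_iff₀ (by positivity), ← one_div_mul_eq_div]
    exact Nat.floor_le (by positivity)
  calc _ ≤ erMeasure n (p n) {ω | ∃ H : (sampleGraph n ω).Subgraph, H.Connected ∧
          H.verts.ncard ≤ N ∧ H.verts.ncard < H.edgeSet.ncard} := by
        refine measure_mono fun ω hω => ?_
        simp only [Set.mem_compl_iff, Set.mem_ofPred_eq, not_forall, not_le,
          Nat.card_coe_set_eq] at hω ⊢
        obtain ⟨H, hH, hHN, hE⟩ := hω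
        exact ⟨H, hH, Nat.le_floor hHN, hE⟩
    _ ≤ _ := erMeasure_exists_complex_subgraph_le n N (p n)
    _ ≤ _ := sum_natCast_mul_pow_le_ofReal _ _ _ (by positivity) hp
    _ ≤ _ := ENNReal.ofReal_le_ofReal (sum_choose_mul_pow_mul_div_pow_le hγ.le hn hN)

/-- If `γ > 1` is a constant and `n·p(n) ≤ γ`, then there is `ε = ε(γ) > 0` such that with
high probability `G(n, p)` contains no connected subgraph on at most `ε·ln n` vertices whose
number of edges exceeds its number of vertices. -/
theorem no_small_complex_subgraphs (γ : ℝ) (hγ : 1 < γ) (p : ℕ → ℝ≥0∞)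
    (hp1 : ∀ n, p n ≤ 1) (hpγ : ∀ n : ℕ, p n * n ≤ ENNReal.ofReal γ) :
    ∃ ε : ℝ, 0 < ε ∧
      Tendsto
        (fun n : ℕ =>
          erMeasure n (p n)
            {ω | ∀ Hs : (sampleGraph n ω).Subgraph, Hs.Connected →
                (Hs.verts.ncard : ℝ) ≤ ε * Real.log n →
                Nat.card Hs.edgeSet ≤ Hs.verts.ncard})
        atTop (nhds 1) :=
  no_small_complex_subgraphs_general γ hγ p hpγ
end
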